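/- Let a, b, c, d be positive integers and consider the pair (X, Oz) associated to the real surface V = {(x,y,z) ∈ ℝ³ : y^a = z^b·x^c + x^d}. Define, for (x,z) ∈ ℝ² with x ≠ 0 and such that z^b·x^c + x^d has a real a-th root (i.e. a is odd or z^b·x^c + x^d ≥ 0), Z'(x,z) = |z^{b−1}·x^c| / ( max(|c·x^{c−1}·z^b + d·x^{d−1}|, |z^b·x^c + x^d|^{(a−1)/a}) · max(|x|, |z^b·x^c + x^d|^{1/a}) ). Then (X, Oz) is Kuo–Verdier (w)-regular at the origin if and only if Z' is bounded on a neighbourhood of the origin, i.e. there exist M > 0 and ε > 0 such that Z'(x,z) ≤ M for all such (x,z) with ‖(x,z)‖ < ε. -/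

import Mathlib

open Filter

noncomputable section

/-- x-partial derivative of f(x,y,z) = y^a - z^b*x^c - x^d. -/
def fxR (b c d : ℕ) (x z : ℝ) : ℝ :=
  -(c : ℝ) * z ^ b * x ^ (c - 1) - (d : ℝ) * x ^ (d - 1)

/-- y-partial derivative of f. -/
def fyR (a : ℕ) (y : ℝ) : ℝ := (a : ℝ) * y ^ (a - 1)

/-- z-partial derivative of f. -/
def fzR (b c : ℕ) (x z : ℝ) : ℝ := -(b : ℝ) * z ^ (b - 1) * x ^ c

/-- Euclidean norm on ℝ³. -/
def nrm3R (u v w : ℝ) : ℝ := Real.sqrt (u ^ 2 + v ^ 2 + w ^ 2)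

/-- Euclidean norm on ℝ². -/
def nrm2R (u v : ℝ) : ℝ := Real.sqrt (u ^ 2 + v ^ 2)

/-- Norm of the gradient ∇f(x,y,z). -/
def gradNormR (a b c d : ℕ) (x y z : ℝ) : ℝ :=
  nrm3R (fxR b c d x z) (fyR a y) (fzR b c x z)

/-- The gradient ∇f(x,y,z) is nonzero. -/
def gradNeR (a b c d : ℕ) (x y z : ℝ) : Prop :=
  ¬ (fxR b c d x z = 0 ∧ fyR a y = 0 ∧ fzR b c x z = 0)

/-- Membership in X = V \ Oz, where V = {y^a = z^b x^c + x^d} and Oz is the z-axis. -/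
def inXR (a b c d : ℕ) (x y z : ℝ) : Prop :=
  y ^ a = z ^ b * x ^ c + x ^ d ∧ ¬ (x = 0 ∧ y = 0)

/-- Whitney (a)-regularity of the pair (X, Oz) at the origin. -/
def aRegR (a b c d : ℕ) : Prop :=
  ∀ x y z : ℕ → ℝ,
    (∀ n, inXR a b c d (x n) (y n) (z n)) →
    Tendsto (fun n => (x n, y n, z n)) atTop (nhds ((0 : ℝ), (0 : ℝ), (0 : ℝ))) →
    (∀ n, gradNeR a b c d (x n) (y n) (z n)) →
    Tendsto (fun n => |fzR b c (x n) (z n)| / gradNormR a b c d (x n) (y n) (z n))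
      atTop (nhds 0)

/-- The (bᵖⁱ) condition for the retraction π(x,y,z) = (0,0,z). -/
def bpiR (a b c d : ℕ) : Prop :=
  ∀ x y z : ℕ → ℝ,
    (∀ n, inXR a b c d (x n) (y n) (z n)) →
    Tendsto (fun n => (x n, y n, z n)) atTop (nhds ((0 : ℝ), (0 : ℝ), (0 : ℝ))) →
    (∀ n, gradNeR a b c d (x n) (y n) (z n)) →
    Tendsto (fun n => |x n * fxR b c d (x n) (z n) + y n * fyR a (y n)| /
        (nrm2R (x n) (y n) * gradNormR a b c d (x n) (y n) (z n)))
      atTop (nhds 0)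

/-- Whitney (b)-regularity of the pair (X, Oz) at the origin. -/
def bRegR (a b c d : ℕ) : Prop := aRegR a b c d ∧ bpiR a b c d

/-- Kuo–Verdier (w)-regularity of the pair (X, Oz) at the origin. -/
def wRegR (a b c d : ℕ) : Prop :=
  ∃ C : ℝ, 0 < C ∧ ∃ ε : ℝ, 0 < ε ∧ ∀ x y z : ℝ,
    inXR a b c d x y z → nrm3R x y z < ε → gradNeR a b c d x y z →
    |fzR b c x z| ≤ C * nrm2R x y * gradNormR a b c d x y z

/-- The test function Z'(x,z) whose boundedness near 0 characterises (w)-regularity. -/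
def Ztest (a b c d : ℕ) (x z : ℝ) : ℝ :=
  |z ^ (b - 1) * x ^ c| /
    (max |(c : ℝ) * x ^ (c - 1) * z ^ b + (d : ℝ) * x ^ (d - 1)|
        (|z ^ b * x ^ c + x ^ d| ^ (((a : ℝ) - 1) / (a : ℝ))) *
      max |x| (|z ^ b * x ^ c + x ^ d| ^ (1 / (a : ℝ))))


/-!
At a point of `X` write `y ^ a = z ^ b * x ^ c + x ^ d`; the roots in `Z'` become `|y|` and
`|y| ^ (a - 1)`, so `Z' = |∂f/∂z| / (b * D * m)` with `D = max |∂f/∂x| (|y| ^ (a - 1))` and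
`m = max |x| |y|`. Now `D ≤ ‖∇f‖ ≤ (a + 1) * D + |∂f/∂z|` and `m ≤ ‖(x, y)‖ ≤ 2 * m`, so the
(w) inequality and a bound on `Z'` imply each other: one way the `|∂f/∂z|` term of the
gradient is absorbed once `‖(x, y)‖` is small, the other way `D * m > 0` near the origin.
Small `(x, z)` give small `y`, so both neighbourhood conditions match.
-/

lemma abs_le_nrm3R_fst (u v w : ℝ) : |u| ≤ nrm3R u v w :=
  Real.abs_le_sqrt (by nlinarith [sq_nonneg v, sq_nonneg w])

lemma abs_le_nrm3R_snd (u v w : ℝ) : |v| ≤ nrm3R u v w :=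
  Real.abs_le_sqrt (by nlinarith [sq_nonneg u, sq_nonneg w])

lemma abs_le_nrm3R_thd (u v w : ℝ) : |w| ≤ nrm3R u v w :=
  Real.abs_le_sqrt (by nlinarith [sq_nonneg u, sq_nonneg v])

lemma nrm3R_le_abs_add_abs_add_abs (u v w : ℝ) : nrm3R u v w ≤ |u| + |v| + |w| :=
  (Real.sqrt_le_left (by positivity)).2 <| by
    nlinarith [sq_abs u, sq_abs v, sq_abs w, mul_nonneg (abs_nonneg u) (abs_nonneg v),
      mul_nonneg (abs_nonneg u) (abs_nonneg w), mul_nonneg (abs_nonneg v) (abs_nonneg w)]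

lemma nrm2R_le_nrm3R (u v w : ℝ) : nrm2R u w ≤ nrm3R u v w :=
  Real.sqrt_le_sqrt (by nlinarith [sq_nonneg v])

lemma max_abs_le_nrm2R (u v : ℝ) : max |u| |v| ≤ nrm2R u v :=
  max_le (Real.abs_le_sqrt (by nlinarith [sq_nonneg v]))
    (Real.abs_le_sqrt (by nlinarith [sq_nonneg u]))

lemma nrm2R_le_two_mul_max_abs (u v : ℝ) : nrm2R u v ≤ 2 * max |u| |v| :=
  (Real.sqrt_le_left (by positivity)).2 <| by
    nlinarith [sq_abs u, sq_abs v, le_max_left |u| |v|, le_max_right |u| |v|,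
      abs_nonneg u, abs_nonneg v]

lemma le_two_mul_of_le_mul_add {t u v : ℝ} (hu : 0 ≤ u) (ht : t ≤ 1 / 2)
    (h : u ≤ t * (v + u)) : u ≤ 2 * t * v := by
  nlinarith

lemma exists_pow_eq_of_odd_or_nonneg {a : ℕ} (ha : a ≠ 0) {s : ℝ} (h : Odd a ∨ 0 ≤ s) :
    ∃ y : ℝ, y ^ a = s := by
  rcases le_or_gt 0 s with hs | hs
  · exact ⟨s ^ (a : ℝ)⁻¹, Real.rpow_inv_natCast_pow hs ha⟩
  · obtain hodd | hs' := h
    · refine ⟨-(-s) ^ (a : ℝ)⁻¹, ?_⟩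
      rw [hodd.neg_pow, Real.rpow_inv_natCast_pow (by linarith) ha, neg_neg]
    · exact absurd hs' hs.not_ge

lemma odd_or_nonneg_of_pow_eq {a : ℕ} {y s : ℝ} (hy : y ^ a = s) : Odd a ∨ 0 ≤ s := by
  rcases Nat.even_or_odd a with he | ho
  · exact Or.inr (hy ▸ he.pow_nonneg y)
  · exact Or.inl ho

section Surface

variable {a b c d : ℕ} {x y z : ℝ}

lemma abs_fzR (b c : ℕ) (x z : ℝ) : |fzR b c x z| = b * |z ^ (b - 1) * x ^ c| := by
  rw [fzR, mul_assoc, abs_mul, abs_neg, Nat.abs_cast]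

lemma abs_fyR (a : ℕ) (y : ℝ) : |fyR a y| = a * |y| ^ (a - 1) := by
  rw [fyR, abs_mul, Nat.abs_cast, abs_pow]

lemma max_abs_fxR_le_gradNormR (ha : 0 < a) :
    max |fxR b c d x z| (|y| ^ (a - 1)) ≤ gradNormR a b c d x y z := by
  refine max_le (abs_le_nrm3R_fst _ _ _) (le_trans ?_ (abs_le_nrm3R_snd _ _ _))
  rw [abs_fyR]
  exact le_mul_of_one_le_left (by positivity) (by exact_mod_cast ha)

lemma gradNormR_le :
    gradNormR a b c d x y z ≤ (a + 1) * max |fxR b c d x z| (|y| ^ (a - 1)) + |fzR b c x z| := by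
  have hfy : |fyR a y| ≤ a * max |fxR b c d x z| (|y| ^ (a - 1)) := by
    rw [abs_fyR]
    exact mul_le_mul_of_nonneg_left (le_max_right _ _) (Nat.cast_nonneg a)
  have := le_max_left |fxR b c d x z| (|y| ^ (a - 1))
  have := nrm3R_le_abs_add_abs_add_abs (fxR b c d x z) (fyR a y) (fzR b c x z)
  rw [gradNormR]
  linarith

lemma ne_zero_of_inXR (ha : 0 < a) (hc : 0 < c) (hd : 0 < d) (hX : inXR a b c d x y z) :
    x ≠ 0 := by
  rintro rfl
  refine hX.2 ⟨rfl, pow_eq_zero_iff ha.ne' |>.1 ?_⟩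
  rw [hX.1, zero_pow hc.ne', zero_pow hd.ne', mul_zero, add_zero]

lemma rpow_abs_eq_of_pow_eq (ha : 0 < a) (hy : y ^ a = z ^ b * x ^ c + x ^ d) :
    |z ^ b * x ^ c + x ^ d| ^ (1 / (a : ℝ)) = |y| ∧
      |z ^ b * x ^ c + x ^ d| ^ (((a : ℝ) - 1) / a) = |y| ^ (a - 1) := by
  have ha' : (a : ℝ) ≠ 0 := by exact_mod_cast ha.ne'
  rw [← hy, abs_pow, ← Real.rpow_natCast, ← Real.rpow_mul (abs_nonneg y),
    ← Real.rpow_mul (abs_nonneg y), mul_one_div_cancel ha', mul_div_cancel₀ _ ha', Real.rpow_one,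
    ← Nat.cast_pred ha, Real.rpow_natCast]
  exact ⟨rfl, rfl⟩

lemma Ztest_eq_of_pow_eq (ha : 0 < a) (hy : y ^ a = z ^ b * x ^ c + x ^ d) :
    Ztest a b c d x z =
      |z ^ (b - 1) * x ^ c| / (max |fxR b c d x z| (|y| ^ (a - 1)) * max |x| |y|) := by
  obtain ⟨h₁, h₂⟩ := rpow_abs_eq_of_pow_eq ha hy
  have hfx : |(c : ℝ) * x ^ (c - 1) * z ^ b + d * x ^ (d - 1)| = |fxR b c d x z| := by
    rw [fxR, ← abs_neg]; ring_nf
  rw [Ztest, h₁, h₂, hfx]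

lemma pow_eq_neg_one_of_fxR_eq_zero (hc : 0 < c) (hd : 0 < d) (hx : x ≠ 0)
    (hs : z ^ b * x ^ c + x ^ d = 0) (hfx : fxR b c d x z = 0) : z ^ b = -1 := by
  have hxc : x ^ c = x ^ (c - 1) * x := by rw [← pow_succ, Nat.sub_add_cancel hc]
  have hxd : x ^ d = x ^ (d - 1) * x := by rw [← pow_succ, Nat.sub_add_cancel hd]
  have hlin : (c : ℝ) * (z ^ b * x ^ c) + d * x ^ d = 0 := by
    rw [fxR] at hfx
    rw [hxc, hxd]
    linear_combination (-x) * hfx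
  have hxd0 : x ^ d ≠ 0 := pow_ne_zero d hx
  have hcd : (c : ℝ) = d := by
    have : ((d : ℝ) - c) * x ^ d = 0 := by linear_combination hlin - (c : ℝ) * hs
    linarith [(mul_eq_zero.1 this).resolve_right hxd0]
  have : (z ^ b + 1) * x ^ d = 0 := by
    rw [Nat.cast_inj.1 hcd] at hs; linear_combination hs
  linarith [(mul_eq_zero.1 this).resolve_right hxd0]

lemma max_abs_fxR_pow_pos (ha : 0 < a) (hb : 0 < b) (hc : 0 < c) (hd : 0 < d) (hx : x ≠ 0)
    (hz : |z| < 1) (hy : y ^ a = z ^ b * x ^ c + x ^ d) :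
    0 < max |fxR b c d x z| (|y| ^ (a - 1)) := by
  by_contra! hle
  have hfx : fxR b c d x z = 0 := abs_nonpos_iff.1 ((le_max_left _ _).trans hle)
  have hy0 : y = 0 := abs_eq_zero.1 <|
    (pow_eq_zero_iff'.1 (le_antisymm ((le_max_right _ _).trans hle) (by positivity))).1
  have hs : z ^ b * x ^ c + x ^ d = 0 := by rw [← hy, hy0, zero_pow ha.ne']
  have hzb := pow_eq_neg_one_of_fxR_eq_zero hc hd hx hs hfx
  have : |z| ^ b < 1 := pow_lt_one₀ (abs_nonneg z) hz hb.ne'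
  rw [← abs_pow, hzb] at this
  norm_num at this

lemma Ztest_le_of_abs_fzR_le {C : ℝ} (ha : 0 < a) (hb : 0 < b) (hC : 0 ≤ C)
    (hy : y ^ a = z ^ b * x ^ c + x ^ d) (hsmall : 4 * C * max |x| |y| ≤ 1)
    (hw : gradNeR a b c d x y z → |fzR b c x z| ≤ C * nrm2R x y * gradNormR a b c d x y z) :
    Ztest a b c d x z ≤ 4 * C * (a + 1) := by
  set D := max |fxR b c d x z| (|y| ^ (a - 1))
  set m := max |x| |y|
  have hm : 0 ≤ m := (abs_nonneg x).trans (le_max_left _ _)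
  have hw' : |fzR b c x z| ≤ C * nrm2R x y * gradNormR a b c d x y z := by
    by_cases hg : gradNeR a b c d x y z
    · exact hw hg
    · rw [(not_not.1 hg).2.2, abs_zero]
      exact mul_nonneg (mul_nonneg hC (Real.sqrt_nonneg _)) (Real.sqrt_nonneg _)
  have hfz : |fzR b c x z| ≤ (2 * C * m) * ((a + 1) * D + |fzR b c x z|) :=
    calc |fzR b c x z| ≤ C * nrm2R x y * gradNormR a b c d x y z := hw'
      _ ≤ C * (2 * m) * ((a + 1) * D + |fzR b c x z|) :=
        mul_le_mul (mul_le_mul_of_nonneg_left (nrm2R_le_two_mul_max_abs x y) hC) gradNormR_le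
          (Real.sqrt_nonneg _) (by positivity)
      _ = (2 * C * m) * ((a + 1) * D + |fzR b c x z|) := by ring
  have hfz' := le_two_mul_of_le_mul_add (abs_nonneg _) (by linarith) hfz
  have hN : |z ^ (b - 1) * x ^ c| ≤ |fzR b c x z| := by
    rw [abs_fzR]
    exact le_mul_of_one_le_left (abs_nonneg _) (by exact_mod_cast hb)
  rw [Ztest_eq_of_pow_eq ha hy]
  refine div_le_of_le_mul₀ (by positivity) (by positivity) ?_
  linarith

lemma abs_fzR_le_of_Ztest_le {M : ℝ} (ha : 0 < a) (hb : 0 < b) (hc : 0 < c) (hd : 0 < d)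
    (hM : 0 ≤ M) (hx : x ≠ 0) (hz : |z| < 1) (hy : y ^ a = z ^ b * x ^ c + x ^ d)
    (hZ : Ztest a b c d x z ≤ M) :
    |fzR b c x z| ≤ b * M * nrm2R x y * gradNormR a b c d x y z := by
  have hD := max_abs_fxR_pow_pos ha hb hc hd hx hz hy
  have hm : 0 < max |x| |y| := (abs_pos.2 hx).trans_le (le_max_left _ _)
  rw [Ztest_eq_of_pow_eq ha hy, div_le_iff₀ (mul_pos hD hm)] at hZ
  calc |fzR b c x z| = b * |z ^ (b - 1) * x ^ c| := abs_fzR b c x z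
    _ ≤ b * (M * (max |fxR b c d x z| (|y| ^ (a - 1)) * max |x| |y|)) := by gcongr
    _ ≤ b * (M * (gradNormR a b c d x y z * nrm2R x y)) := by
      gcongr
      · exact Real.sqrt_nonneg _
      · exact max_abs_fxR_le_gradNormR ha
      · exact max_abs_le_nrm2R x y
    _ = b * M * nrm2R x y * gradNormR a b c d x y z := by ring

lemma abs_pow_le_two_mul_abs (hc : 0 < c) (hd : 0 < d) (hx : |x| ≤ 1) (hz : |z| ≤ 1)
    (hy : y ^ a = z ^ b * x ^ c + x ^ d) : |y| ^ a ≤ 2 * |x| := by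
  have hzb : |z| ^ b ≤ 1 := pow_le_one₀ (abs_nonneg z) hz
  have hxc : |x| ^ c ≤ |x| := pow_le_of_le_one (abs_nonneg x) hx hc.ne'
  have hxd : |x| ^ d ≤ |x| := pow_le_of_le_one (abs_nonneg x) hx hd.ne'
  calc |y| ^ a = |z ^ b * x ^ c + x ^ d| := by rw [← abs_pow, hy]
    _ ≤ |z| ^ b * |x| ^ c + |x| ^ d := by
      simpa only [abs_mul, abs_pow] using abs_add_le (z ^ b * x ^ c) (x ^ d)
    _ ≤ 2 * |x| := by nlinarith [pow_nonneg (abs_nonneg x) c]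

lemma exists_root_near_origin (ha : 0 < a) (hc : 0 < c) (hd : 0 < d) {η : ℝ} (hη : 0 < η) :
    ∃ δ > 0, ∀ x z : ℝ, (Odd a ∨ 0 ≤ z ^ b * x ^ c + x ^ d) →
      Real.sqrt (x ^ 2 + z ^ 2) < δ →
      ∃ y : ℝ, y ^ a = z ^ b * x ^ c + x ^ d ∧ |x| + |y| + |z| < η := by
  set e := min (η / 2) (1 / 2)
  have he : 0 < e := by positivity
  have he1 : e ≤ 1 / 2 := min_le_right _ _
  have hea : e ^ a ≤ e := pow_le_of_le_one he.le (by linarith) ha.ne'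
  refine ⟨e ^ a / 2, by positivity, fun x z hroot hxz => ?_⟩
  obtain ⟨y, hy⟩ := exists_pow_eq_of_odd_or_nonneg ha.ne' hroot
  have hx : |x| < e ^ a / 2 := (le_max_left _ _).trans_lt ((max_abs_le_nrm2R x z).trans_lt hxz)
  have hz : |z| < e ^ a / 2 := (le_max_right _ _).trans_lt ((max_abs_le_nrm2R x z).trans_lt hxz)
  have hya : |y| ^ a < e ^ a :=
    (abs_pow_le_two_mul_abs hc hd (by linarith) (by linarith) hy).trans_lt (by linarith)
  have hye : |y| < e := (pow_lt_pow_iff_left₀ (abs_nonneg y) he.le ha.ne').1 hya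
  refine ⟨y, hy, ?_⟩
  linarith [min_le_left (η / 2) (1 / 2)]

end Surface

/-- (w)-regularity of (X, Oz) at the origin is equivalent to boundedness of Z' near 0. -/
theorem w_regular_iff_Ztest_bounded (a b c d : ℕ)
    (ha : 0 < a) (hb : 0 < b) (hc : 0 < c) (hd : 0 < d) :
    wRegR a b c d ↔
      ∃ M : ℝ, 0 < M ∧ ∃ ε : ℝ, 0 < ε ∧ ∀ x z : ℝ, x ≠ 0 →
        (Odd a ∨ 0 ≤ z ^ b * x ^ c + x ^ d) →
        Real.sqrt (x ^ 2 + z ^ 2) < ε → Ztest a b c d x z ≤ M := by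
  constructor
  · rintro ⟨C, hC, ε, hε, hw⟩
    obtain ⟨δ, hδ, hsmall⟩ :=
      exists_root_near_origin ha hc hd (lt_min hε (by positivity : 0 < 1 / (4 * C)))
    refine ⟨4 * C * (a + 1), by positivity, δ, hδ, fun x z hx hroot hxz => ?_⟩
    obtain ⟨y, hy, hxyz⟩ := hsmall x z hroot hxz
    have hη := lt_min_iff.1 hxyz
    refine Ztest_le_of_abs_fzR_le ha hb hC.le hy ?_ (hw x y z ⟨hy, fun h => hx h.1⟩ ?_)
    · have hm : max |x| |y| ≤ 1 / (4 * C) := max_le (by linarith [abs_nonneg y, abs_nonneg z])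
        (by linarith [abs_nonneg x, abs_nonneg z])
      calc 4 * C * max |x| |y| ≤ 4 * C * (1 / (4 * C)) := by gcongr
        _ = 1 := by field_simp
    · exact (nrm3R_le_abs_add_abs_add_abs x y z).trans_lt hη.1
  · rintro ⟨M, hM, ε, hε, hB⟩
    refine ⟨b * M, by positivity, min ε 1, by positivity, fun x y z hX hn _ => ?_⟩
    have hx := ne_zero_of_inXR ha hc hd hX
    have hz : |z| < 1 := (abs_le_nrm3R_thd x y z).trans_lt (hn.trans_le (min_le_right _ _))
    have hxz : Real.sqrt (x ^ 2 + z ^ 2) < ε :=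
      (nrm2R_le_nrm3R x y z).trans_lt (hn.trans_le (min_le_left _ _))
    exact abs_fzR_le_of_Ztest_le ha hb hc hd hM.le hx hz hX.1 <|
      hB x z hx (odd_or_nonneg_of_pow_eq hX.1) hxz

end
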